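/- For any uniformly bounded set of infinite real sequences U ⊆ [-K,K]^ℕ, the ℓ_p entropies h_p(U) = lim_{r→0⁺} limsup_n n^{-1} log N(U, r, d_{n,p}) are equal for all 1 ≤ p ≤ ∞. -/

import Mathlib

open Finset Filter
open scoped ENNReal

/-- The normalized ℓ_p pseudo-distance on initial segments of length `n`. -/
noncomputable def dnp (p : ℝ) (n : ℕ) (u v : ℕ → ℝ) : ℝ :=
  ((1 / (n : ℝ)) * ∑ k ∈ Finset.range n, |u k - v k| ^ p) ^ (1 / p)

/-- The ℓ_∞ pseudo-distance on initial segments of length `n`. -/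
noncomputable def dninf (n : ℕ) (u v : ℕ → ℝ) : ℝ :=
  ⨆ k : Fin n, |u (k : ℕ) - v (k : ℕ)|

/-- The covering number of `U` at radius `δ` with respect to the pseudo-metric `d`. -/
noncomputable def coveringNumber (δ : ℝ) (d : (ℕ → ℝ) → (ℕ → ℝ) → ℝ)
    (U : Set (ℕ → ℝ)) : ℝ≥0∞ :=
  sInf {m : ℝ≥0∞ | ∃ C : Finset (ℕ → ℝ), (C.card : ℝ≥0∞) = m ∧
    ∀ u ∈ U, ∃ c ∈ C, d u c ≤ δ}

/-- The exponential growth rate of the ℓ_p covering numbers of `U` at radius `r`. -/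
noncomputable def entropyAtScale (U : Set (ℕ → ℝ)) (d : ℕ → (ℕ → ℝ) → (ℕ → ℝ) → ℝ)
    (r : ℝ) : ℝ :=
  limsup (fun n : ℕ => Real.log (coveringNumber r (d n) U).toReal / n) atTop

/-- The entropy of `U` with respect to the family of pseudo-metrics `d n`:
since `entropyAtScale` is nonincreasing in `r`, the limit as `r ↘ 0` equals the
supremum over all `r > 0`. -/
noncomputable def seqEntropy (U : Set (ℕ → ℝ)) (d : ℕ → (ℕ → ℝ) → (ℕ → ℝ) → ℝ) : ℝ :=
  sSup {a : ℝ | ∃ r > 0, a = entropyAtScale U d r}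

/-! Since `dnp p n ≤ dninf n`, the `ℓ_p` covering numbers are at most the `ℓ_∞` ones. Conversely,
if `dnp p n u c ≤ ε α^(1/p)`, Chebyshev's inequality shows that `u` and `c` are more than `ε`
apart in at most `α n` of the first `n` coordinates; overwriting `c` there by points of a finite
`ε`-net `Γ` of the coordinate range gives a point `ε`-close to `u` in `dninf n`. There are at most
`α^(-α n) (1 + |Γ| α)^n` such overwriting patterns, an exponential rate `negMulLog α + |Γ| α`
that tends to `0` with `α`. So each `ℓ_∞` entropy at scale `ε` is, up to any `η > 0`, bounded by an
`ℓ_p` entropy at a smaller scale, and the two suprema over scales agree. -/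

open Real Topology

section CoveringNumber

variable {δ ε : ℝ} {d d' : (ℕ → ℝ) → (ℕ → ℝ) → ℝ} {U : Set (ℕ → ℝ)}

lemma coveringNumber_le_card {C : Finset (ℕ → ℝ)} (hC : ∀ u ∈ U, ∃ c ∈ C, d u c ≤ δ) :
    coveringNumber δ d U ≤ #C :=
  sInf_le ⟨C, rfl, hC⟩

lemma coveringNumber_mono (h : ∀ u v, d u v ≤ d' u v) :
    coveringNumber δ d U ≤ coveringNumber δ d' U := by
  refine sInf_le_sInf ?_
  rintro _ ⟨C, rfl, hC⟩
  exact ⟨C, rfl, fun u hu => (hC u hu).imp fun c ⟨hc, hd⟩ => ⟨hc, (h u c).trans hd⟩⟩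

lemma one_le_coveringNumber (hU : U.Nonempty) : 1 ≤ coveringNumber δ d U := by
  refine le_sInf ?_
  rintro _ ⟨C, rfl, hC⟩
  obtain ⟨u, hu⟩ := hU
  obtain ⟨c, hc, -⟩ := hC u hu
  exact_mod_cast Finset.card_pos.mpr ⟨c, hc⟩

lemma coveringNumber_le_mul {T : ℕ} (hT : T ≠ 0)
    (h : ∀ C : Finset (ℕ → ℝ), (∀ u ∈ U, ∃ c ∈ C, d u c ≤ δ) →
      ∃ C' : Finset (ℕ → ℝ), (∀ u ∈ U, ∃ c ∈ C', d' u c ≤ ε) ∧ #C' ≤ #C * T) :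
    coveringNumber ε d' U ≤ coveringNumber δ d U * T := by
  have hT₀ : (T : ℝ≥0∞) ≠ 0 := by exact_mod_cast hT
  rw [← ENNReal.div_le_iff hT₀ (ENNReal.natCast_ne_top T)]
  refine le_sInf ?_
  rintro _ ⟨C, rfl, hC⟩
  obtain ⟨C', hC', hcard⟩ := h C hC
  rw [ENNReal.div_le_iff hT₀ (ENNReal.natCast_ne_top T)]
  exact (coveringNumber_le_card hC').trans (by exact_mod_cast hcard)

lemma one_le_toReal_coveringNumber (hU : U.Nonempty) (hfin : coveringNumber δ d U ≠ ⊤) :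
    1 ≤ (coveringNumber δ d U).toReal := by
  simpa using ENNReal.toReal_mono hfin (one_le_coveringNumber hU)

lemma log_toReal_coveringNumber_nonneg (hU : U.Nonempty) :
    0 ≤ log (coveringNumber δ d U).toReal := by
  by_cases hfin : coveringNumber δ d U = ⊤
  · simp [hfin]
  · exact log_nonneg (one_le_toReal_coveringNumber hU hfin)

lemma log_toReal_coveringNumber_le (hU : U.Nonempty) {N : ℝ≥0∞} (hN : N ≠ ⊤)
    (h : coveringNumber δ d U ≤ N) : log (coveringNumber δ d U).toReal ≤ log N.toReal :=
  log_le_log (one_pos.trans_le (one_le_toReal_coveringNumber hU (ne_top_of_le_ne_top hN h)))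
    (ENNReal.toReal_mono hN h)

end CoveringNumber

section SegmentDistances

variable {n : ℕ} {p ε α : ℝ} {u v : ℕ → ℝ}

lemma abs_sub_le_dninf {k : ℕ} (hk : k < n) : |u k - v k| ≤ dninf n u v :=
  le_ciSup (f := fun k : Fin n => |u k - v k|) (Set.finite_range _).bddAbove ⟨k, hk⟩

lemma dninf_le (hε : 0 ≤ ε) (h : ∀ k < n, |u k - v k| ≤ ε) : dninf n u v ≤ ε :=
  Real.iSup_le (fun k => h k k.2) hε

lemma dnp_le_dninf (hp : 0 < p) : dnp p n u v ≤ dninf n u v := by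
  have hM : 0 ≤ dninf n u v := Real.iSup_nonneg fun _ => abs_nonneg _
  have hsum : ∑ k ∈ range n, |u k - v k| ^ p ≤ dninf n u v ^ p * n := by
    calc ∑ k ∈ range n, |u k - v k| ^ p ≤ ∑ _k ∈ range n, dninf n u v ^ p :=
          sum_le_sum fun k hk =>
            rpow_le_rpow (abs_nonneg _) (abs_sub_le_dninf (mem_range.mp hk)) hp.le
      _ = dninf n u v ^ p * n := by rw [sum_const, card_range, nsmul_eq_mul, mul_comm]
  have hmean : 1 / (n : ℝ) * ∑ k ∈ range n, |u k - v k| ^ p ≤ dninf n u v ^ p := by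
    rw [one_div_mul_eq_div]
    exact div_le_of_le_mul₀ n.cast_nonneg (by positivity) hsum
  calc dnp p n u v ≤ (dninf n u v ^ p) ^ (1 / p) :=
        rpow_le_rpow (by positivity) hmean (by positivity)
    _ = dninf n u v := by rw [← rpow_mul hM, mul_one_div_cancel hp.ne', rpow_one]

lemma card_lt_abs_sub_le (hp : 0 < p) (hε : 0 < ε) (hα : 0 ≤ α)
    (h : dnp p n u v ≤ ε * α ^ (1 / p)) :
    (#{k : Fin n | ε < |u k - v k|} : ℝ) ≤ α * n := by
  set bad : Finset (Fin n) := {k | ε < |u k - v k|}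
  have hmean : 1 / (n : ℝ) * ∑ k ∈ range n, |u k - v k| ^ p ≤ ε ^ p * α := by
    have hbase : 0 ≤ 1 / (n : ℝ) * ∑ k ∈ range n, |u k - v k| ^ p := by positivity
    have := rpow_le_rpow (by unfold dnp; positivity) h hp.le
    rwa [dnp, ← rpow_mul hbase, one_div_mul_cancel hp.ne', rpow_one,
      mul_rpow hε.le (by positivity), ← rpow_mul hα, one_div_mul_cancel hp.ne', rpow_one] at this
  have hsum : ∑ k ∈ range n, |u k - v k| ^ p ≤ n * (ε ^ p * α) := by
    rcases n.eq_zero_or_pos with rfl | hn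
    · simp
    rwa [one_div_mul_eq_div, div_le_iff₀ (by exact_mod_cast hn), mul_comm] at hmean
  have hchebyshev : (#bad : ℝ) * ε ^ p ≤ n * (ε ^ p * α) :=
    calc (#bad : ℝ) * ε ^ p = ∑ _k ∈ bad, ε ^ p := by rw [sum_const, nsmul_eq_mul]
      _ ≤ ∑ k ∈ bad, |u k - v k| ^ p :=
          sum_le_sum fun k hk => rpow_le_rpow hε.le (mem_filter.mp hk).2.le hp.le
      _ ≤ ∑ k : Fin n, |u k - v k| ^ p :=
          sum_le_sum_of_subset_of_nonneg (filter_subset _ _) fun _ _ _ => by positivity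
      _ = ∑ k ∈ range n, |u k - v k| ^ p := Fin.sum_univ_eq_sum_range (fun k => |u k - v k| ^ p) n
      _ ≤ n * (ε ^ p * α) := hsum
  have hεp : 0 < ε ^ p := rpow_pos_of_pos hε p
  nlinarith

end SegmentDistances

section SparsePatterns

variable (ι β : Type*) [Fintype ι] [DecidableEq ι] [Fintype β]

def sparsePatterns (s : ℕ) : Finset (ι → Option β) :=
  {f | #{i | (f i).isSome} ≤ s}

lemma const_none_mem_sparsePatterns (s : ℕ) : (fun _ => none) ∈ sparsePatterns ι β s := by
  simp [sparsePatterns]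

/-- Weighting each `some _` value by `t ≤ 1` and summing over all maps gives the bound. -/
lemma card_sparsePatterns_le {t : ℝ} (ht₀ : 0 < t) (ht₁ : t ≤ 1) (s : ℕ) :
    (#(sparsePatterns ι β s) : ℝ) ≤ t⁻¹ ^ s * (1 + Fintype.card β * t) ^ Fintype.card ι := by
  let w : Option β → ℝ := fun o => if o.isSome then t else 1
  have hprod (f : ι → Option β) : ∏ i, w (f i) = t ^ #{i | (f i).isSome} := by
    simp [w, prod_ite]
  have hsum : ∑ o, w o = 1 + Fintype.card β * t := by simp [w, Fintype.sum_option]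
  have key : (#(sparsePatterns ι β s) : ℝ) * t ^ s ≤ (1 + Fintype.card β * t) ^ Fintype.card ι :=
    calc (#(sparsePatterns ι β s) : ℝ) * t ^ s = ∑ _f ∈ sparsePatterns ι β s, t ^ s := by
          rw [sum_const, nsmul_eq_mul]
      _ ≤ ∑ f ∈ sparsePatterns ι β s, ∏ i, w (f i) := by
          refine sum_le_sum fun f hf => ?_
          rw [hprod]
          exact pow_le_pow_of_le_one ht₀.le ht₁ (mem_filter.mp hf).2
      _ ≤ ∑ f : ι → Option β, ∏ i, w (f i) :=
          sum_le_sum_of_subset_of_nonneg (subset_univ _) fun f _ _ => by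
            rw [hprod]; positivity
      _ = (1 + Fintype.card β * t) ^ Fintype.card ι := by
          rw [← Fintype.prod_sum, hsum, prod_const, card_univ]
  rwa [inv_pow, ← div_eq_inv_mul, le_div_iff₀ (by positivity)]

lemma log_card_sparsePatterns_le {α : ℝ} (hα₀ : 0 < α) (hα₁ : α ≤ 1) (n : ℕ) :
    log #(sparsePatterns (Fin n) β ⌊α * n⌋₊) ≤ n * (negMulLog α + Fintype.card β * α) := by
  set s := ⌊α * n⌋₊
  have hcard_pos : (0 : ℝ) < #(sparsePatterns (Fin n) β s) := by
    exact_mod_cast card_pos.mpr ⟨_, const_none_mem_sparsePatterns _ _ s⟩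
  have hs : (s : ℝ) ≤ α * n := Nat.floor_le (by positivity)
  have hlog_inv : 0 ≤ log α⁻¹ := log_nonneg (one_le_inv_iff₀.mpr ⟨hα₀, hα₁⟩)
  have hlog_one_add : log (1 + Fintype.card β * α) ≤ Fintype.card β * α := by
    linarith [log_le_sub_one_of_pos (by positivity : 0 < 1 + Fintype.card β * α)]
  calc log #(sparsePatterns (Fin n) β s)
      ≤ log (α⁻¹ ^ s * (1 + Fintype.card β * α) ^ n) := by
        refine log_le_log hcard_pos ?_
        simpa using card_sparsePatterns_le (Fin n) β hα₀ hα₁ s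
    _ = s * log α⁻¹ + n * log (1 + Fintype.card β * α) := by
        rw [log_mul (by positivity) (by positivity), log_pow, log_pow]
    _ ≤ α * n * log α⁻¹ + n * (Fintype.card β * α) := by gcongr
    _ = n * (negMulLog α + Fintype.card β * α) := by rw [negMulLog, log_inv]; ring

end SparsePatterns

section Patch

variable {Γ : Finset ℝ} {n : ℕ}

def patch (c : ℕ → ℝ) (f : Fin n → Option Γ) (k : ℕ) : ℝ :=
  if h : k < n then (f ⟨k, h⟩).elim (c k) (↑) else c k

lemma patch_of_lt (c : ℕ → ℝ) (f : Fin n → Option Γ) {k : ℕ} (hk : k < n) :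
    patch c f k = (f ⟨k, hk⟩).elim (c k) (↑) :=
  dif_pos hk

variable {p ε α : ℝ} {u c : ℕ → ℝ}

lemma exists_mem_sparsePatterns_dninf_patch_le (hp : 0 < p) (hε : 0 < ε) (hα : 0 ≤ α)
    (hu : ∀ k, ∃ y ∈ Γ, |u k - y| ≤ ε) (h : dnp p n u c ≤ ε * α ^ (1 / p)) :
    ∃ f ∈ sparsePatterns (Fin n) Γ ⌊α * n⌋₊, dninf n u (patch c f) ≤ ε := by
  choose y hyΓ hy using hu
  let f : Fin n → Option Γ := fun k => if ε < |u k - c k| then some ⟨y k, hyΓ k⟩ else none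
  have hsupp :
      ({k | (f k).isSome} : Finset (Fin n)) = ({k | ε < |u k - c k|} : Finset (Fin n)) := by
    ext k
    by_cases hk : ε < |u k - c k| <;> simp [f, hk]
  refine ⟨f, ?_, dninf_le hε.le fun k hk => ?_⟩
  · simp only [sparsePatterns, mem_filter, mem_univ, true_and, hsupp]
    exact Nat.le_floor (card_lt_abs_sub_le hp hε hα h)
  · rw [patch_of_lt c f hk]
    by_cases hbad : ε < |u k - c k|
    · simpa [f, hbad] using hy k
    · simpa [f, hbad] using le_of_not_gt hbad

end Patch

section Covers

variable {U : Set (ℕ → ℝ)} {Γ : Finset ℝ} {p ε α : ℝ}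

lemma coveringNumber_dninf_le_card_pow (hε : 0 ≤ ε)
    (hU : ∀ u ∈ U, ∀ k, ∃ y ∈ Γ, |u k - y| ≤ ε) (n : ℕ) :
    coveringNumber ε (dninf n) U ≤ (#Γ : ℝ≥0∞) ^ n := by
  classical
  let C : Finset (ℕ → ℝ) := univ.image fun g : Fin n → Γ => patch 0 (some ∘ g)
  have hC : ∀ u ∈ U, ∃ c ∈ C, dninf n u c ≤ ε := by
    intro u hu
    choose y hyΓ hy using hU u hu
    refine ⟨_, mem_image_of_mem _ (mem_univ fun k : Fin n => ⟨y k, hyΓ k⟩),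
      dninf_le hε fun k hk => ?_⟩
    simpa [patch_of_lt _ _ hk] using hy k
  calc coveringNumber ε (dninf n) U ≤ #C := coveringNumber_le_card hC
    _ ≤ ((#Γ ^ n : ℕ) : ℝ≥0∞) := by
        exact_mod_cast card_image_le.trans (by simp)
    _ = (#Γ : ℝ≥0∞) ^ n := by push_cast; rfl

lemma coveringNumber_dninf_le_mul (hp : 0 < p) (hε : 0 < ε) (hα : 0 ≤ α)
    (hU : ∀ u ∈ U, ∀ k, ∃ y ∈ Γ, |u k - y| ≤ ε) (n : ℕ) :
    coveringNumber ε (dninf n) U ≤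
      coveringNumber (ε * α ^ (1 / p)) (dnp p n) U * #(sparsePatterns (Fin n) Γ ⌊α * n⌋₊) := by
  classical
  set P := sparsePatterns (Fin n) Γ ⌊α * n⌋₊
  have hP : #P ≠ 0 := (card_pos.mpr ⟨_, const_none_mem_sparsePatterns _ _ _⟩).ne'
  refine coveringNumber_le_mul hP fun C hC => ?_
  refine ⟨(C ×ˢ P).image fun x => patch x.1 x.2, fun u hu => ?_, ?_⟩
  · obtain ⟨c, hc, hd⟩ := hC u hu
    obtain ⟨f, hf, hdf⟩ := exists_mem_sparsePatterns_dninf_patch_le hp hε hα (hU u hu) hd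
    exact ⟨patch c f, mem_image.mpr ⟨(c, f), mem_product.mpr ⟨hc, hf⟩, rfl⟩, hdf⟩
  · exact card_image_le.trans (card_product C P).le

end Covers

lemma exists_finset_forall_abs_sub_le {U : Set (ℕ → ℝ)} {S : Set ℝ}
    (hS : Bornology.IsBounded S) (hU : ∀ u ∈ U, ∀ k, u k ∈ S) {ε : ℝ} (hε : 0 < ε) :
    ∃ Γ : Finset ℝ, ∀ u ∈ U, ∀ k, ∃ y ∈ Γ, |u k - y| ≤ ε := by
  obtain ⟨t, ht, hSt⟩ := Metric.totallyBounded_iff.mp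
    (hS.isCompact_closure.totallyBounded.subset subset_closure) ε hε
  refine ⟨ht.toFinset, fun u hu k => ?_⟩
  obtain ⟨y, hy, hxy⟩ := Set.mem_iUnion₂.mp (hSt (hU u hu k))
  exact ⟨y, ht.mem_toFinset.mpr hy, (Metric.mem_ball.mp hxy).le⟩

lemma exists_negMulLog_add_mul_le (c : ℝ) {η : ℝ} (hη : 0 < η) :
    ∃ α ∈ Set.Ioc (0 : ℝ) 1, negMulLog α + c * α ≤ η := by
  have hcont : Continuous fun α => negMulLog α + c * α := by fun_prop
  have hlim : Tendsto (fun α => negMulLog α + c * α) (𝓝[>] 0) (𝓝 0) := by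
    simpa using (hcont.tendsto 0).mono_left nhdsWithin_le_nhds
  exact ((hlim.eventually (gt_mem_nhds hη)).and (Ioc_mem_nhdsGT one_pos)).exists.imp
    fun α ⟨hle, hα⟩ => ⟨hα, hle.le⟩

lemma limsup_le_limsup_add {a b : ℕ → ℝ} {c : ℝ} (h : ∀ n, a n ≤ b n + c)
    (ha : IsCoboundedUnder (· ≤ ·) atTop a) (hb : IsBoundedUnder (· ≤ ·) atTop b)
    (hb' : IsCoboundedUnder (· ≤ ·) atTop b) :
    limsup a atTop ≤ limsup b atTop + c := by
  rw [← limsup_add_const atTop b c hb hb']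
  exact limsup_le_limsup (Eventually.of_forall h) ha (isBoundedUnder_le_add hb isBoundedUnder_const)

section SSup

variable {A B : Set ℝ}

lemma bddAbove_of_forall_exists_le_add (hB : BddAbove B) (h : ∀ a ∈ A, ∃ b ∈ B, a ≤ b + 1) :
    BddAbove A := by
  obtain ⟨M, hM⟩ := hB
  refine ⟨M + 1, fun a ha => ?_⟩
  obtain ⟨b, hb, hab⟩ := h a ha
  linarith [hM hb]

lemma csSup_le_csSup_of_forall_exists_le_add (hA : A.Nonempty) (hB : BddAbove B)
    (h : ∀ a ∈ A, ∀ η > 0, ∃ b ∈ B, a ≤ b + η) : sSup A ≤ sSup B :=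
  csSup_le hA fun a ha => le_of_forall_pos_le_add fun η hη => by
    obtain ⟨b, hb, hab⟩ := h a ha η hη
    exact hab.trans (add_le_add_left (le_csSup hB hb) η)

/-- Also valid for unbounded sets, where `sSup` is `0` on both sides. -/
lemma sSup_eq_sSup_of_forall_exists_le_add (hAB : ∀ a ∈ A, ∀ η > 0, ∃ b ∈ B, a ≤ b + η)
    (hBA : ∀ b ∈ B, ∀ η > 0, ∃ a ∈ A, b ≤ a + η) : sSup A = sSup B := by
  rcases A.eq_empty_or_nonempty with rfl | ⟨a, ha⟩
  · rw [Set.eq_empty_of_forall_notMem (s := B) fun b hb => by simpa using hBA b hb 1 one_pos]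
  obtain ⟨b, hb, -⟩ := hAB a ha 1 one_pos
  by_cases hBbdd : BddAbove B
  · have hAbdd := bddAbove_of_forall_exists_le_add hBbdd fun a ha => hAB a ha 1 one_pos
    exact le_antisymm (csSup_le_csSup_of_forall_exists_le_add ⟨a, ha⟩ hBbdd hAB)
      (csSup_le_csSup_of_forall_exists_le_add ⟨b, hb⟩ hAbdd hBA)
  · have hAbdd : ¬BddAbove A := fun hAbdd =>
      hBbdd (bddAbove_of_forall_exists_le_add hAbdd fun b hb => hBA b hb 1 one_pos)
    rw [Real.sSup_of_not_bddAbove hAbdd, Real.sSup_of_not_bddAbove hBbdd]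

end SSup

section Entropy

variable {U : Set (ℕ → ℝ)} {S : Set ℝ} {p r ε η : ℝ} {d : ℕ → (ℕ → ℝ) → (ℕ → ℝ) → ℝ}

lemma coveringNumber_dninf_ne_top (hS : Bornology.IsBounded S) (hU : ∀ u ∈ U, ∀ k, u k ∈ S)
    (hr : 0 < r) (n : ℕ) : coveringNumber r (dninf n) U ≠ ⊤ := by
  obtain ⟨Γ, hΓ⟩ := exists_finset_forall_abs_sub_le hS hU hr
  exact ne_top_of_le_ne_top (by simp) (coveringNumber_dninf_le_card_pow hr.le hΓ n)

lemma isBoundedUnder_log_coveringNumber (hS : Bornology.IsBounded S)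
    (hU : ∀ u ∈ U, ∀ k, u k ∈ S) (hUne : U.Nonempty) (hd : ∀ n u v, d n u v ≤ dninf n u v)
    (hr : 0 < r) :
    IsBoundedUnder (· ≤ ·) atTop fun n : ℕ => log (coveringNumber r (d n) U).toReal / n := by
  obtain ⟨Γ, hΓ⟩ := exists_finset_forall_abs_sub_le hS hU hr
  refine isBoundedUnder_of ⟨log #Γ, fun n => div_le_of_le_mul₀ n.cast_nonneg
    (log_natCast_nonneg _) ?_⟩
  have hcov := (coveringNumber_mono (hd n)).trans (coveringNumber_dninf_le_card_pow hr.le hΓ n)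
  calc log (coveringNumber r (d n) U).toReal ≤ log ((#Γ : ℝ≥0∞) ^ n).toReal :=
        log_toReal_coveringNumber_le hUne (by simp) hcov
    _ = log #Γ * n := by simp [log_pow, mul_comm]

lemma isCoboundedUnder_log_coveringNumber (hUne : U.Nonempty) :
    IsCoboundedUnder (· ≤ ·) atTop fun n : ℕ => log (coveringNumber r (d n) U).toReal / n :=
  isCoboundedUnder_le_of_le atTop fun n =>
    div_nonneg (log_toReal_coveringNumber_nonneg hUne) n.cast_nonneg

lemma entropyAtScale_dnp_le_dninf (hS : Bornology.IsBounded S) (hU : ∀ u ∈ U, ∀ k, u k ∈ S)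
    (hUne : U.Nonempty) (hp : 0 < p) (hr : 0 < r) :
    entropyAtScale U (fun n => dnp p n) r ≤ entropyAtScale U (fun n => dninf n) r :=
  limsup_le_limsup
    (Eventually.of_forall fun n => div_le_div_of_nonneg_right
      (log_toReal_coveringNumber_le hUne (coveringNumber_dninf_ne_top hS hU hr n)
        (coveringNumber_mono fun _ _ => dnp_le_dninf hp)) n.cast_nonneg)
    (isCoboundedUnder_log_coveringNumber hUne)
    (isBoundedUnder_log_coveringNumber hS hU hUne (fun _ _ _ => le_rfl) hr)

lemma exists_entropyAtScale_dninf_le_dnp_add (hS : Bornology.IsBounded S)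
    (hU : ∀ u ∈ U, ∀ k, u k ∈ S) (hUne : U.Nonempty) (hp : 0 < p) (hε : 0 < ε) (hη : 0 < η) :
    ∃ δ > 0, entropyAtScale U (fun n => dninf n) ε ≤
      entropyAtScale U (fun n => dnp p n) δ + η := by
  obtain ⟨Γ, hΓ⟩ := exists_finset_forall_abs_sub_le hS hU hε
  obtain ⟨α, ⟨hα₀, hα₁⟩, hαη⟩ := exists_negMulLog_add_mul_le (Fintype.card Γ) hη
  set δ := ε * α ^ (1 / p)
  have hδ : 0 < δ := by positivity
  refine ⟨δ, hδ, limsup_le_limsup_add (fun n => ?_) (isCoboundedUnder_log_coveringNumber hUne)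
    (isBoundedUnder_log_coveringNumber hS hU hUne (fun _ _ _ => dnp_le_dninf hp) hδ)
    (isCoboundedUnder_log_coveringNumber hUne)⟩
  set T := #(sparsePatterns (Fin n) Γ ⌊α * n⌋₊)
  have hT₀ : (T : ℝ) ≠ 0 := by
    exact_mod_cast (card_pos.mpr ⟨_, const_none_mem_sparsePatterns _ _ _⟩).ne'
  have hlogT : log T ≤ n * η := (log_card_sparsePatterns_le Γ hα₀ hα₁ n).trans
    (mul_le_mul_of_nonneg_left hαη n.cast_nonneg)
  have hfin : coveringNumber δ (dnp p n) U ≠ ⊤ := ne_top_of_le_ne_top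
    (coveringNumber_dninf_ne_top hS hU hδ n) (coveringNumber_mono fun _ _ => dnp_le_dninf hp)
  have hlog : log (coveringNumber ε (dninf n) U).toReal ≤
      log (coveringNumber δ (dnp p n) U).toReal + n * η := by
    calc log (coveringNumber ε (dninf n) U).toReal
        ≤ log (coveringNumber δ (dnp p n) U * T).toReal :=
          log_toReal_coveringNumber_le hUne (ENNReal.mul_ne_top hfin (by simp))
            (coveringNumber_dninf_le_mul hp hε hα₀.le hΓ n)
      _ = log (coveringNumber δ (dnp p n) U).toReal + log T := by
          rw [ENNReal.toReal_mul, ENNReal.toReal_natCast,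
            log_mul (one_pos.trans_le (one_le_toReal_coveringNumber hUne hfin)).ne' hT₀]
      _ ≤ log (coveringNumber δ (dnp p n) U).toReal + n * η := by gcongr
  dsimp only
  rcases n.eq_zero_or_pos with rfl | hn
  · simpa using hη.le
  · rw [div_add' _ _ _ (by positivity), div_le_div_iff_of_pos_right (by positivity)]
    linarith

end Entropy

theorem lp_entropies_all_equal_general
    (K : ℝ) (U : Set (ℕ → ℝ)) (hU : ∀ u ∈ U, ∀ k, u k ∈ Set.Icc (-K) K)
    (p : ℝ) (hp : 1 ≤ p) :
    seqEntropy U (fun n => dnp p n) = seqEntropy U (fun n => dninf n) := by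
  rcases U.eq_empty_or_nonempty with rfl | hUne
  · simp [seqEntropy, entropyAtScale, coveringNumber]
  have hp₀ : 0 < p := by linarith
  have hS := Metric.isBounded_Icc (-K) K
  refine sSup_eq_sSup_of_forall_exists_le_add ?_ ?_
  · rintro _ ⟨r, hr, rfl⟩ η hη
    exact ⟨_, ⟨r, hr, rfl⟩,
      (entropyAtScale_dnp_le_dninf hS hU hUne hp₀ hr).trans (le_add_of_nonneg_right hη.le)⟩
  · rintro _ ⟨ε, hε, rfl⟩ η hη
    obtain ⟨δ, hδ, h⟩ := exists_entropyAtScale_dninf_le_dnp_add hS hU hUne hp₀ hε hη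
    exact ⟨_, ⟨δ, hδ, rfl⟩, h⟩

theorem lp_entropies_all_equal
    (K : ℝ) (hK : 1 ≤ K) (U : Set (ℕ → ℝ)) (hU : ∀ u ∈ U, ∀ k, u k ∈ Set.Icc (-K) K)
    (p : ℝ) (hp : 1 ≤ p) :
    seqEntropy U (fun n => dnp p n) = seqEntropy U (fun n => dninf n) :=
  lp_entropies_all_equal_general K U hU p hp
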